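/- Suppose G and G' are locally compact, rectifiably connected noncomplete metric spaces, f: G → G' is an M-quasihyperbolic homeomorphism, and γ is a (λ,μ)-quasigeodesic in G with respect to the quasihyperbolic metric. Then the image γ' = f(γ) is a (ν,h)-solid arc in G', with ν = M²(λ+μ) and h = M(λ+μ). -/

import Mathlib

open Set Metric

noncomputable section

variable {D : Type*} [MetricSpace D]

/-- Distance from a point to the metric boundary `∂D = D̄ \ D`. -/
def dB (x : D) : ℝ :=
  Metric.infDist (x : UniformSpace.Completion D)
    ((Set.range ((↑) : D → UniformSpace.Completion D))ᶜ)

/-- A rectifiable curve from `x` to `y`, given in (1-Lipschitz) arclength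
parametrization on `[0, L]`; `L` is its length. -/
structure Curve (D : Type*) [MetricSpace D] (x y : D) where
  L : ℝ
  hL : 0 ≤ L
  γ : ℝ → D
  lip : LipschitzOnWith 1 γ (Set.Icc 0 L)
  h0 : γ 0 = x
  h1 : γ L = y

/-- Quasihyperbolic length of the subarc with parameters in `[s,t]`. -/
def Curve.qhLenOn {x y : D} (c : Curve D x y) (s t : ℝ) : ℝ :=
  ∫ u in s..t, 1 / dB (c.γ u)

/-- Quasihyperbolic length of a curve. -/
def Curve.qhLen {x y : D} (c : Curve D x y) : ℝ := c.qhLenOn 0 c.L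

/-- The quasihyperbolic distance: infimum of quasihyperbolic lengths of curves. -/
def qhDist (x y : D) : ℝ := sInf {r : ℝ | ∃ c : Curve D x y, r = c.qhLen}

/-- Every pair of points is joined by a rectifiable curve. -/
def RectConnected (D : Type*) [MetricSpace D] : Prop :=
  ∀ x y : D, Nonempty (Curve D x y)

/-- A length space: distance is the infimum of lengths of joining curves. -/
def IsLengthSpace (D : Type*) [MetricSpace D] : Prop :=
  ∀ x y : D, ∀ ε > 0, ∃ c : Curve D x y, c.L ≤ dist x y + ε

/-- A quasihyperbolic geodesic. -/
def Curve.IsQHGeodesic {x y : D} (c : Curve D x y) : Prop :=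
  ∀ s t : ℝ, s ∈ Set.Icc 0 c.L → t ∈ Set.Icc 0 c.L → s ≤ t →
    c.qhLenOn s t = qhDist (c.γ s) (c.γ t)

/-- An `a`-cone arc: `min{ℓ(α[x,z]), ℓ(α[z,y])} ≤ a·d_D(z)` for all `z` on the arc. -/
def Curve.IsConeArc {x y : D} (c : Curve D x y) (a : ℝ) : Prop :=
  ∀ t ∈ Set.Icc 0 c.L, min t (c.L - t) ≤ a * dB (c.γ t)

/-- A `(λ,μ)`-quasigeodesic with respect to the quasihyperbolic metric. -/
def Curve.IsQuasigeodesic {x y : D} (c : Curve D x y) (lam mu : ℝ) : Prop :=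
  ∀ s t : ℝ, s ∈ Set.Icc 0 c.L → t ∈ Set.Icc 0 c.L → s ≤ t →
    c.qhLenOn s t ≤ lam * qhDist (c.γ s) (c.γ t) + mu

/-- An `a`-John space. -/
def IsJohn (D : Type*) [MetricSpace D] (a : ℝ) : Prop :=
  ∀ x y : D, ∃ c : Curve D x y, c.IsConeArc a

/-- A `c`-uniform space. -/
def IsUniform (D : Type*) [MetricSpace D] (c : ℝ) : Prop :=
  ∀ x y : D, ∃ α : Curve D x y, α.L ≤ c * dist x y ∧ α.IsConeArc c

/-- Gromov product with respect to the quasihyperbolic metric. -/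
def gromovProd (x y w : D) : ℝ := (qhDist x w + qhDist y w - qhDist x y) / 2

/-- `(D,k)` is Gromov `δ`-hyperbolic (four-point condition). -/
def QHHyperbolic (D : Type*) [MetricSpace D] (δ : ℝ) : Prop :=
  ∀ x y z w : D, min (gromovProd x y w) (gromovProd y z w) - δ ≤ gromovProd x z w

/-- `(D,k)` is `K`-roughly starlike with respect to `w`. -/
def RoughlyStarlike (D : Type*) [MetricSpace D] (K : ℝ) (w : D) : Prop :=
  ∀ x : D, ∃ γ : ℝ → D, γ 0 = w ∧
    (∀ s t : ℝ, 0 ≤ s → 0 ≤ t → qhDist (γ s) (γ t) = |s - t|) ∧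
    ∃ t : ℝ, 0 ≤ t ∧ qhDist x (γ t) ≤ K

/-- The `h`-coarse quasihyperbolic length of the part of the curve `β` with
parameters in `[s,t]`. -/
def coarseLen {E : Type*} [MetricSpace E] (β : ℝ → E) (s t h : ℝ) : ℝ :=
  sSup {r : ℝ | ∃ n : ℕ, ∃ u : Fin (n + 1) → ℝ, Monotone u ∧
    (∀ i, u i ∈ Set.Icc s t) ∧
    (∀ i : Fin n, h ≤ qhDist (β (u i.castSucc)) (β (u i.succ))) ∧
    r = ∑ i : Fin n, qhDist (β (u i.castSucc)) (β (u i.succ))}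

/-- `λ`-annular quasiconvexity. -/
def AnnularQuasiconvex (X : Type*) [MetricSpace X] (lam : ℝ) : Prop :=
  ∀ (x : X) (r r' : ℝ), 0 < r' → r' < r →
    ∀ y z : X, y ∈ Metric.ball x r \ Metric.ball x r' →
      z ∈ Metric.ball x r \ Metric.ball x r' →
      ∃ c : Curve X y z, c.L ≤ lam * dist y z ∧
        ∀ t ∈ Set.Icc 0 c.L, c.γ t ∈ Metric.ball x (lam * r) \ Metric.ball x (r' / lam)

end

/-!
Pull an `M(λ + μ)`-coarse chain on `f ∘ γ` back along the `M`-quasihyperbolic map: it becomes a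
`(λ + μ)`-coarse chain on `γ`. Its quasihyperbolic sum is at most the quasihyperbolic length of the
subarc of `γ`, hence at most `λ k + μ` with `k = k(γ s, γ t)`; since one gap already has size
`λ + μ`, this forces `k ≥ 1`, so the sum is at most `(λ + μ) k`. Pushing forward costs one factor
`M` on the sum and one on `k`.
-/

open UniformSpace

theorem Fin.sum_succ_sub_castSucc {M : Type*} [AddCommGroup M] {n : ℕ} (f : Fin (n + 1) → M) :
    ∑ i : Fin n, (f i.succ - f i.castSucc) = f (Fin.last n) - f 0 := by
  induction n with
  | zero => simp
  | succ n ih =>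
    rw [Fin.sum_univ_castSucc, ← Fin.succ_last, ← Fin.castSucc_zero]
    simpa using
      congrArg (· + (f (Fin.last n).succ - f (Fin.last n).castSucc)) (ih (f ∘ Fin.castSucc))

namespace UniformSpace.Completion

variable {D : Type*} [MetricSpace D]

/-- A compact ball around `x` is closed in the completion and, by density, contains the open ball
of the same radius there. -/
theorem isOpen_range_coe [WeaklyLocallyCompactSpace D] :
    IsOpen (range ((↑) : D → Completion D)) := by
  refine Metric.isOpen_iff.2 ?_
  rintro _ ⟨x, rfl⟩
  obtain ⟨r, hr, hcompact⟩ := exists_isCompact_closedBall x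
  have hclosed : IsClosed (((↑) : D → Completion D) '' closedBall x r) :=
    (hcompact.image (continuous_coe D)).isClosed
  refine ⟨r, hr, fun z hz => ?_⟩
  have hball : Metric.ball (x : Completion D) r ∩ range ((↑) : D → Completion D) ⊆
      (↑) '' closedBall x r := by
    rintro _ ⟨hy, y, rfl⟩
    rw [mem_ball, Completion.dist_eq] at hy
    exact ⟨y, mem_closedBall.2 hy.le, rfl⟩
  exact image_subset_range _ _ <| closure_minimal hball hclosed <|
    denseRange_coe.open_subset_closure_inter Metric.isOpen_ball hz

end UniformSpace.Completion

section QuasihyperbolicLength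

variable {D : Type*} [MetricSpace D]

theorem dB_nonneg (x : D) : 0 ≤ dB x := infDist_nonneg

theorem continuous_dB : Continuous (dB : D → ℝ) :=
  (continuous_infDist_pt _).comp (Completion.continuous_coe D)

theorem dB_pos [WeaklyLocallyCompactSpace D]
    (hbdry : (range ((↑) : D → Completion D))ᶜ.Nonempty) (x : D) : 0 < dB x :=
  (Completion.isOpen_range_coe.isClosed_compl.notMem_iff_infDist_pos hbdry).1
    (not_not.2 (mem_range_self x))

/-- Either `D` has nonempty boundary and `dB` is positive, or `dB ≡ 0` and so is `1 / dB`. -/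
theorem continuous_one_div_dB [WeaklyLocallyCompactSpace D] :
    Continuous (fun x : D => 1 / dB x) := by
  rcases (range ((↑) : D → Completion D))ᶜ.eq_empty_or_nonempty with hbdry | hbdry
  · simp only [dB, hbdry, infDist_empty, div_zero]
    exact continuous_const
  · exact continuous_const.div continuous_dB fun x => (dB_pos hbdry x).ne'

theorem qhDist_nonneg (x y : D) : 0 ≤ qhDist x y :=
  Real.sInf_nonneg <| by
    rintro _ ⟨c, rfl⟩
    exact intervalIntegral.integral_nonneg c.hL fun _ _ => one_div_nonneg.2 (dB_nonneg _)

namespace Curve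

variable {x y : D} (c : Curve D x y)

theorem qhLenOn_nonneg {s t : ℝ} (hst : s ≤ t) : 0 ≤ c.qhLenOn s t :=
  intervalIntegral.integral_nonneg hst fun _ _ => one_div_nonneg.2 (dB_nonneg _)

def restrict {s t : ℝ} (hs : s ∈ Icc 0 c.L) (ht : t ∈ Icc 0 c.L) (hst : s ≤ t) :
    Curve D (c.γ s) (c.γ t) where
  L := t - s
  hL := sub_nonneg.2 hst
  γ u := c.γ (u + s)
  lip u hu v hv := by
    have hshift : ∀ w ∈ Icc 0 (t - s), w + s ∈ Icc 0 c.L := fun w hw =>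
      ⟨by linarith [hw.1, hs.1], by linarith [hw.2, ht.2]⟩
    simpa [edist_dist, dist_add_right] using c.lip (hshift u hu) (hshift v hv)
  h0 := by simp
  h1 := by simp

theorem qhLen_restrict {s t : ℝ} (hs : s ∈ Icc 0 c.L) (ht : t ∈ Icc 0 c.L) (hst : s ≤ t) :
    (c.restrict hs ht hst).qhLen = c.qhLenOn s t := by
  show ∫ u in 0..t - s, 1 / dB (c.γ (u + s)) = ∫ u in s..t, 1 / dB (c.γ u)
  simpa using intervalIntegral.integral_comp_add_right (fun u => 1 / dB (c.γ u)) s (a := 0)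
    (b := t - s)

theorem qhDist_le_qhLenOn {s t : ℝ} (hs : s ∈ Icc 0 c.L) (ht : t ∈ Icc 0 c.L) (hst : s ≤ t) :
    qhDist (c.γ s) (c.γ t) ≤ c.qhLenOn s t := by
  rw [← c.qhLen_restrict hs ht hst]
  refine csInf_le ⟨0, ?_⟩ ⟨_, rfl⟩
  rintro _ ⟨c', rfl⟩
  exact c'.qhLenOn_nonneg c'.hL

theorem intervalIntegrable_one_div_dB [WeaklyLocallyCompactSpace D] {a b : ℝ}
    (ha : a ∈ Icc 0 c.L) (hb : b ∈ Icc 0 c.L) :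
    IntervalIntegrable (fun u => 1 / dB (c.γ u)) MeasureTheory.volume a b :=
  (continuous_one_div_dB.comp_continuousOn c.lip.continuousOn |>.mono
    (uIcc_subset_Icc ha hb)).intervalIntegrable

theorem qhLenOn_eq_sub [WeaklyLocallyCompactSpace D] {s t : ℝ}
    (hs : s ∈ Icc 0 c.L) (ht : t ∈ Icc 0 c.L) :
    c.qhLenOn s t = c.qhLenOn 0 t - c.qhLenOn 0 s :=
  (intervalIntegral.integral_interval_sub_left
    (c.intervalIntegrable_one_div_dB (left_mem_Icc.2 c.hL) ht)
    (c.intervalIntegrable_one_div_dB (left_mem_Icc.2 c.hL) hs)).symm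

theorem sum_qhDist_le_qhLenOn [WeaklyLocallyCompactSpace D] {s t : ℝ}
    (hs : s ∈ Icc 0 c.L) (ht : t ∈ Icc 0 c.L) {n : ℕ} {u : Fin (n + 1) → ℝ} (hu : Monotone u)
    (huIcc : ∀ i, u i ∈ Icc s t) :
    ∑ i : Fin n, qhDist (c.γ (u i.castSucc)) (c.γ (u i.succ)) ≤ c.qhLenOn s t := by
  have hmem : ∀ i, u i ∈ Icc 0 c.L := fun i => ⟨hs.1.trans (huIcc i).1, (huIcc i).2.trans ht.2⟩
  have hfirst := c.qhLenOn_nonneg (huIcc 0).1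
  have hlast := c.qhLenOn_nonneg (huIcc (Fin.last n)).2
  rw [c.qhLenOn_eq_sub hs (hmem 0)] at hfirst
  rw [c.qhLenOn_eq_sub (hmem _) ht] at hlast
  calc ∑ i : Fin n, qhDist (c.γ (u i.castSucc)) (c.γ (u i.succ))
      ≤ ∑ i : Fin n, c.qhLenOn (u i.castSucc) (u i.succ) :=
        Finset.sum_le_sum fun i _ =>
          c.qhDist_le_qhLenOn (hmem _) (hmem _) (hu i.castSucc_le_succ)
    _ = ∑ i : Fin n, (c.qhLenOn 0 (u i.succ) - c.qhLenOn 0 (u i.castSucc)) := by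
        simp only [c.qhLenOn_eq_sub (hmem _) (hmem _)]
    _ = c.qhLenOn 0 (u (Fin.last n)) - c.qhLenOn 0 (u 0) :=
        Fin.sum_succ_sub_castSucc fun i => c.qhLenOn 0 (u i)
    _ ≤ c.qhLenOn 0 t - c.qhLenOn 0 s := by linarith
    _ = c.qhLenOn s t := (c.qhLenOn_eq_sub hs ht).symm

/-- A `(λ, μ)`-quasigeodesic is `(λ + μ, λ + μ)`-solid: a chain of gaps at least `λ + μ` forces
`k(γ s, γ t) ≥ 1`, and then the additive constant `μ` is absorbed into `μ k(γ s, γ t)`. -/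
theorem IsQuasigeodesic.sum_qhDist_le [WeaklyLocallyCompactSpace D] {c : Curve D x y}
    {lam mu : ℝ} (hc : c.IsQuasigeodesic lam mu) (hlam : 0 < lam) (hmu : 0 ≤ mu) {s t : ℝ}
    (hs : s ∈ Icc 0 c.L) (ht : t ∈ Icc 0 c.L) {n : ℕ} {u : Fin (n + 1) → ℝ} (hu : Monotone u)
    (huIcc : ∀ i, u i ∈ Icc s t)
    (hcoarse : ∀ i : Fin n, lam + mu ≤ qhDist (c.γ (u i.castSucc)) (c.γ (u i.succ))) :
    ∑ i : Fin n, qhDist (c.γ (u i.castSucc)) (c.γ (u i.succ)) ≤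
      (lam + mu) * qhDist (c.γ s) (c.γ t) := by
  have hk0 := qhDist_nonneg (c.γ s) (c.γ t)
  have hSk := (c.sum_qhDist_le_qhLenOn hs ht hu huIcc).trans
    (hc s t hs ht ((huIcc 0).1.trans (huIcc 0).2))
  rcases n.eq_zero_or_pos with rfl | hn
  · simpa using mul_nonneg (add_nonneg hlam.le hmu) hk0
  have hS : lam + mu ≤ ∑ i : Fin n, qhDist (c.γ (u i.castSucc)) (c.γ (u i.succ)) :=
    (hcoarse ⟨0, hn⟩).trans
      (Finset.single_le_sum (f := fun i : Fin n => qhDist (c.γ (u i.castSucc)) (c.γ (u i.succ)))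
        (fun i _ => qhDist_nonneg _ _) (Finset.mem_univ _))
  have hk1 : 1 ≤ qhDist (c.γ s) (c.γ t) :=
    le_of_mul_le_mul_left (by linarith) hlam
  linarith [mul_le_mul_of_nonneg_left hk1 hmu]

end Curve

end QuasihyperbolicLength

theorem stmt7_general {G G' : Type*} [MetricSpace G] [MetricSpace G']
    [LocallyCompactSpace G]
    (f : G ≃ₜ G') (M lam mu : ℝ) (hM : 1 ≤ M) (hlam : 1 ≤ lam) (hmu : 0 ≤ mu)
    (hqh : ∀ u v : G, qhDist u v / M ≤ qhDist (f u) (f v) ∧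
      qhDist (f u) (f v) ≤ M * qhDist u v)
    (x y : G) (γ : Curve G x y) (hγ : γ.IsQuasigeodesic lam mu) :
    ∀ s t : ℝ, s ∈ Set.Icc 0 γ.L → t ∈ Set.Icc 0 γ.L → s ≤ t →
      coarseLen (fun u => f (γ.γ u)) s t (M * (lam + mu)) ≤
        M ^ 2 * (lam + mu) * qhDist (f (γ.γ s)) (f (γ.γ t)) := by
  intro s t hs ht _
  have hM0 : 0 < M := by linarith
  have hk' := qhDist_nonneg (f (γ.γ s)) (f (γ.γ t))
  refine Real.sSup_le ?_ (by positivity)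
  rintro _ ⟨n, u, hu, huIcc, hcoarse, rfl⟩
  have hpullback : ∀ i : Fin n, lam + mu ≤ qhDist (γ.γ (u i.castSucc)) (γ.γ (u i.succ)) :=
    fun i => le_of_mul_le_mul_left ((hcoarse i).trans (hqh _ _).2) hM0
  have hk : qhDist (γ.γ s) (γ.γ t) ≤ M * qhDist (f (γ.γ s)) (f (γ.γ t)) := by
    rw [mul_comm, ← div_le_iff₀ hM0]
    exact (hqh _ _).1
  calc ∑ i : Fin n, qhDist (f (γ.γ (u i.castSucc))) (f (γ.γ (u i.succ)))
      ≤ ∑ i : Fin n, M * qhDist (γ.γ (u i.castSucc)) (γ.γ (u i.succ)) :=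
        Finset.sum_le_sum fun i _ => (hqh _ _).2
    _ = M * ∑ i : Fin n, qhDist (γ.γ (u i.castSucc)) (γ.γ (u i.succ)) :=
        (Finset.mul_sum _ _ _).symm
    _ ≤ M * ((lam + mu) * qhDist (γ.γ s) (γ.γ t)) := by
        gcongr
        exact hγ.sum_qhDist_le (by linarith) hmu hs ht hu huIcc hpullback
    _ ≤ M * ((lam + mu) * (M * qhDist (f (γ.γ s)) (f (γ.γ t)))) := by
        gcongr
    _ = M ^ 2 * (lam + mu) * qhDist (f (γ.γ s)) (f (γ.γ t)) := by ring

/-- an `M`-QH homeomorphism maps a `(λ,μ)`-quasigeodesic to a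
`(ν,h)`-solid arc with `ν = M²(λ+μ)`, `h = M(λ+μ)`. -/
theorem stmt7 {G G' : Type*} [MetricSpace G] [MetricSpace G']
    [LocallyCompactSpace G] [LocallyCompactSpace G']
    (hrc : RectConnected G) (hrc' : RectConnected G')
    (hnc : ¬ CompleteSpace G) (hnc' : ¬ CompleteSpace G')
    (f : G ≃ₜ G') (M lam mu : ℝ) (hM : 1 ≤ M) (hlam : 1 ≤ lam) (hmu : 0 ≤ mu)
    (hqh : ∀ u v : G, qhDist u v / M ≤ qhDist (f u) (f v) ∧
      qhDist (f u) (f v) ≤ M * qhDist u v)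
    (x y : G) (γ : Curve G x y) (hγ : γ.IsQuasigeodesic lam mu) :
    ∀ s t : ℝ, s ∈ Set.Icc 0 γ.L → t ∈ Set.Icc 0 γ.L → s ≤ t →
      coarseLen (fun u => f (γ.γ u)) s t (M * (lam + mu)) ≤
        M ^ 2 * (lam + mu) * qhDist (f (γ.γ s)) (f (γ.γ t)) :=
  stmt7_general f M lam mu hM hlam hmu hqh x y γ hγ
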